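/- Define O_R : [0,1) → [0,1) by O_R(x) = 1/(2⌊1/(1−x)⌋ + 1 − 1/(1−x)). Then the map n ↦ O_R^n(0) is a bijection between ℕ ∪ {0} and ℚ ∩ [0,1): the O_R-orbit of 0 passes through every rational number in [0,1) exactly once. -/

import Mathlib

/-- The odometer associated to the backward continued fraction (Renyi) map:
`O_R(x) = 1/(2⌊1/(1−x)⌋ + 1 − 1/(1−x))`. -/
noncomputable def renyiOdometer (x : ℝ) : ℝ :=
  1 / (2 * (⌊1 / (1 - x)⌋ : ℝ) + 1 - 1 / (1 - x))

private def stern : ℕ → ℕ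
  | 0 => 0
  | 1 => 1
  | n + 2 =>
    if (n + 2) % 2 = 0 then stern ((n + 2) / 2)
    else stern ((n + 2) / 2) + stern ((n + 2) / 2 + 1)
decreasing_by all_goals omega

lemma stern_two_mul (n : ℕ) : stern (2 * n) = stern n := by
  cases n with
  | zero => rfl
  | succ m =>
    show stern (2 * m + 2) = stern (m + 1)
    rw [stern]
    have h1 : (2 * m + 2) % 2 = 0 := by omega
    have h2 : (2 * m + 2) / 2 = m + 1 := by omega
    simp [h1, h2]

lemma stern_two_mul_add_one (n : ℕ) : stern (2 * n + 1) = stern n + stern (n + 1) := by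
  cases n with
  | zero => simp [stern]
  | succ m =>
    show stern (2 * m + 3) = _
    rw [show 2 * m + 3 = (2 * m + 1) + 2 from rfl, stern]
    have h1 : ¬ (2 * m + 1 + 2) % 2 = 0 := by omega
    have h2 : (2 * m + 1 + 2) / 2 = m + 1 := by omega
    rw [if_neg h1, h2]

lemma stern_pos : ∀ n : ℕ, 1 ≤ n → 0 < stern n := by
  intro n
  induction n using Nat.strong_induction_on with
  | _ n ih =>
    intro hn
    match n, hn with
    | 1, _ => simp [stern]
    | n + 2, _ =>
      rcases Nat.even_or_odd (n + 2) with ⟨m, hm⟩ | ⟨m, hm⟩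
      · have : n + 2 = 2 * m := by omega
        rw [this, stern_two_mul]
        exact ih m (by omega) (by omega)
      · rw [hm, stern_two_mul_add_one]
        have := ih (m + 1) (by omega) (by omega)
        omega

lemma stern_gcd : ∀ n : ℕ, Nat.gcd (stern n) (stern (n + 1)) = 1 := by
  intro n
  induction n using Nat.strong_induction_on with
  | _ n ih =>
    match n with
    | 0 => simp [stern]
    | n + 1 =>
      rcases Nat.even_or_odd (n + 1) with ⟨m, hm⟩ | ⟨m, hm⟩
      · have h1 : n + 1 = 2 * m := by omega
        rw [h1, stern_two_mul, show 2 * m + 1 = 2 * m + 1 from rfl, stern_two_mul_add_one]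
        have := ih m (by omega)
        simpa [Nat.gcd_add_self_right] using this
      · have h1 : n + 1 = 2 * m + 1 := by omega
        rw [h1, stern_two_mul_add_one, show 2 * m + 1 + 1 = 2 * (m + 1) from by ring,
          stern_two_mul]
        have := ih m (by omega)
        rw [Nat.add_comm, Nat.gcd_comm]
        simpa [Nat.gcd_add_self_right, Nat.gcd_comm] using this

/-- the key recurrence -/
lemma stern_key : ∀ n : ℕ,
    stern (n + 2) + stern n = (2 * (stern n / stern (n + 1)) + 1) * stern (n + 1) := by
  intro n
  induction n using Nat.strong_induction_on with
  | _ n ih =>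
    rcases Nat.even_or_odd n with ⟨m, hm⟩ | ⟨m, hm⟩
    · have h1 : n = 2 * m := by omega
      have e1 : n + 2 = 2 * (m + 1) := by omega
      have e2 : n + 1 = 2 * m + 1 := by omega
      rw [h1, show 2 * m + 2 = 2 * (m + 1) from by ring, stern_two_mul, stern_two_mul,
        stern_two_mul_add_one]
      have hlt : stern m < stern m + stern (m + 1) :=
        Nat.lt_add_of_pos_right (stern_pos (m + 1) (by omega))
      rw [Nat.div_eq_of_lt hlt]
      ring
    · have h1 : n = 2 * m + 1 := by omega
      have e1 : n + 2 = 2 * (m + 1) + 1 := by omega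
      have e2 : n + 1 = 2 * (m + 1) := by omega
      rw [h1, show 2 * m + 1 + 2 = 2 * (m + 1) + 1 from by ring,
        show 2 * m + 1 + 1 = 2 * (m + 1) from by ring,
        stern_two_mul_add_one, stern_two_mul_add_one, stern_two_mul]
      have hpos : 0 < stern (m + 1) := stern_pos (m + 1) (by omega)
      have hdiv : (stern m + stern (m + 1)) / stern (m + 1) = stern m / stern (m + 1) + 1 :=
        Nat.add_div_right _ hpos
      rw [hdiv]
      have := ih m (by omega)
      nlinarith [this]

lemma stern_lt_of_even {n : ℕ} (h : n % 2 = 0) : stern n < stern (n + 1) := by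
  obtain ⟨m, rfl⟩ : ∃ m, n = 2 * m := ⟨n / 2, by omega⟩
  rw [stern_two_mul, stern_two_mul_add_one]
  exact Nat.lt_add_of_pos_right (stern_pos (m + 1) (by omega))

lemma stern_ge_of_odd {n : ℕ} (h : n % 2 = 1) : stern (n + 1) ≤ stern n := by
  obtain ⟨m, rfl⟩ : ∃ m, n = 2 * m + 1 := ⟨n / 2, by omega⟩
  rw [stern_two_mul_add_one, show 2 * m + 1 + 1 = 2 * (m + 1) from by ring, stern_two_mul]
  omega

lemma stern_pair_inj : ∀ a b : ℕ, stern a = stern b → stern (a + 1) = stern (b + 1) → a = b := by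
  intro a
  induction a using Nat.strong_induction_on with
  | _ a ih =>
    intro b h1 h2
    match a, b with
    | 0, b =>
      rcases Nat.eq_zero_or_pos b with rfl | hb
      · rfl
      · have := stern_pos b hb
        simp [stern] at h1
        omega
    | a + 1, 0 =>
      have := stern_pos (a + 1) (by omega)
      simp [stern] at h1
      omega
    | a + 1, b + 1 =>
      have hpar : (a + 1) % 2 = (b + 1) % 2 := by
        rcases Nat.even_or_odd (a + 1) with ha | ha <;> rcases Nat.even_or_odd (b + 1) with hb | hb
        · have := Nat.even_iff.1 ha; have := Nat.even_iff.1 hb; omega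
        · have h3 := stern_lt_of_even (Nat.even_iff.1 ha)
          have h4 := stern_ge_of_odd (Nat.odd_iff.1 hb)
          omega
        · have h3 := stern_ge_of_odd (Nat.odd_iff.1 ha)
          have h4 := stern_lt_of_even (Nat.even_iff.1 hb)
          omega
        · have := Nat.odd_iff.1 ha; have := Nat.odd_iff.1 hb; omega
      rcases Nat.even_or_odd (a + 1) with ⟨m, hm⟩ | ⟨m, hm⟩
      · obtain ⟨l, hl⟩ : ∃ l, b + 1 = 2 * l := by
          rcases Nat.even_or_odd (b + 1) with ⟨l, hl⟩ | hodd
          · exact ⟨l, by omega⟩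
          · exfalso; rcases hodd with ⟨l, hl⟩; omega
        have hm' : a + 1 = 2 * m := by omega
        rw [hm', hl, stern_two_mul, stern_two_mul] at h1
        rw [hm', hl, stern_two_mul_add_one, stern_two_mul_add_one] at h2
        have : m = l := ih m (by omega) l h1 (by omega)
        omega
      · obtain ⟨l, hl⟩ : ∃ l, b + 1 = 2 * l + 1 := by
          rcases Nat.even_or_odd (b + 1) with ⟨l, hl⟩ | ⟨l, hl⟩
          · exfalso; omega
          · exact ⟨l, by omega⟩
        rw [hm, hl, stern_two_mul_add_one, stern_two_mul_add_one] at h1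
        rw [hm, hl, show 2 * m + 1 + 1 = 2 * (m + 1) from by ring,
          show 2 * l + 1 + 1 = 2 * (l + 1) from by ring, stern_two_mul, stern_two_mul] at h2
        have : m = l := ih m (by omega) l (by omega) h2
        omega

lemma stern_pair_surj : ∀ s p q : ℕ, p + q ≤ s → 0 < q → Nat.gcd p q = 1 →
    ∃ n, stern n = p ∧ stern (n + 1) = q := by
  intro s
  induction s with
  | zero => intro p q h hq _; omega
  | succ s ih =>
    intro p q hs hq hg
    rcases Nat.eq_zero_or_pos p with rfl | hp
    · have : q = 1 := by simpa using hg
      exact ⟨0, by simp [stern], by simp [this, stern]⟩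
    rcases lt_or_ge p q with h | h
    · obtain ⟨m, hm1, hm2⟩ := ih p (q - p) (by omega) (by omega)
        (by rw [Nat.gcd_sub_self_right (by omega)]; exact hg)
      exact ⟨2 * m, by rw [stern_two_mul]; exact hm1,
        by rw [stern_two_mul_add_one]; omega⟩
    · obtain ⟨m, hm1, hm2⟩ := ih (p - q) q (by omega) hq
        (by rw [Nat.gcd_sub_self_left (by omega : q ≤ p)]; exact hg)
      refine ⟨2 * m + 1, by rw [stern_two_mul_add_one]; omega, ?_⟩
      rw [show 2 * m + 1 + 1 = 2 * (m + 1) from by ring, stern_two_mul]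
      exact hm2

lemma renyi_step (n : ℕ) :
    renyiOdometer ((stern n : ℝ) / ((stern n : ℝ) + (stern (n + 1) : ℝ))) =
      (stern (n + 1) : ℝ) / ((stern (n + 1) : ℝ) + (stern (n + 2) : ℝ)) := by
  set a := stern n with ha
  set b := stern (n + 1) with hb
  set c := stern (n + 2) with hc
  have hbpos : 0 < b := stern_pos (n + 1) (by omega)
  have hcpos : 0 < c := stern_pos (n + 2) (by omega)
  have key : c + a = (2 * (a / b) + 1) * b := stern_key n
  have hbR : (0 : ℝ) < (b : ℝ) := by exact_mod_cast hbpos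
  have habR : (0 : ℝ) < (a : ℝ) + (b : ℝ) := by positivity
  have hbcR : (0 : ℝ) < (b : ℝ) + (c : ℝ) := by positivity
  have h1 : 1 - (a : ℝ) / ((a : ℝ) + (b : ℝ)) = (b : ℝ) / ((a : ℝ) + (b : ℝ)) := by
    field_simp
    ring
  have h2 : 1 / ((b : ℝ) / ((a : ℝ) + (b : ℝ))) = ((a : ℝ) + (b : ℝ)) / (b : ℝ) := by
    rw [one_div_div]
  have hmod := Nat.div_add_mod a b
  have hmlt := Nat.mod_lt a hbpos
  set d := a / b with hd
  have hub : a < (d + 1) * b := by nlinarith [hmod, hmlt]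
  have hlb : d * b ≤ a := Nat.div_mul_le_self a b
  have hubR : (a : ℝ) < ((d : ℝ) + 1) * (b : ℝ) := by exact_mod_cast hub
  have hlbR : (d : ℝ) * (b : ℝ) ≤ (a : ℝ) := by exact_mod_cast hlb
  have hfloor : ⌊((a : ℝ) + (b : ℝ)) / (b : ℝ)⌋ = (d : ℤ) + 1 := by
    rw [Int.floor_eq_iff]
    constructor
    · rw [le_div_iff₀ hbR]
      push_cast
      nlinarith [hlbR]
    · rw [div_lt_iff₀ hbR]
      push_cast
      nlinarith [hubR]
  unfold renyiOdometer
  rw [h1, h2, hfloor]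
  have keyR : (c : ℝ) + (a : ℝ) = (2 * (d : ℝ) + 1) * (b : ℝ) := by
    exact_mod_cast key
  have hden : 2 * (((d : ℤ) + 1 : ℤ) : ℝ) + 1 - ((a : ℝ) + (b : ℝ)) / (b : ℝ)
      = ((b : ℝ) + (c : ℝ)) / (b : ℝ) := by
    push_cast
    field_simp
    nlinarith [keyR]
  rw [hden, one_div_div]

lemma orbit_eq (n : ℕ) :
    (renyiOdometer)^[n] 0 = (stern n : ℝ) / ((stern n : ℝ) + (stern (n + 1) : ℝ)) := by
  induction n with
  | zero => simp [stern]
  | succ m ih =>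
    rw [Function.iterate_succ_apply', ih, renyi_step]

/-- The map `n ↦ O_R^n(0)` is a bijection between `ℕ ∪ {0}` and the rational
numbers in `[0,1)`: the `O_R`-orbit of `0` passes through every rational in
`[0,1)` exactly once. -/
theorem renyiOdometer_counts_rationals :
    (Function.Injective fun n : ℕ => (renyiOdometer)^[n] 0) ∧
      Set.range (fun n : ℕ => (renyiOdometer)^[n] 0) =
        {x : ℝ | x ∈ Set.Ico (0 : ℝ) 1 ∧ ∃ q : ℚ, (q : ℝ) = x} := by
  constructor
  · intro m n h
    simp only [orbit_eq] at h
    set am := stern m with ham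
    set bm := stern (m + 1) with hbm
    set an := stern n with han
    set bn := stern (n + 1) with hbn
    have hbmp : 0 < bm := stern_pos (m + 1) (by omega)
    have hbnp : 0 < bn := stern_pos (n + 1) (by omega)
    have habm : (0 : ℝ) < (am : ℝ) + (bm : ℝ) := by
      have : (0:ℝ) < (bm : ℝ) := by exact_mod_cast hbmp
      positivity
    have habn : (0 : ℝ) < (an : ℝ) + (bn : ℝ) := by
      have : (0:ℝ) < (bn : ℝ) := by exact_mod_cast hbnp
      positivity
    rw [div_eq_div_iff (ne_of_gt habm) (ne_of_gt habn)] at h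
    have hcast : am * (an + bn) = an * (am + bm) := by exact_mod_cast h
    have hmul : am * bn = an * bm := by nlinarith [hcast]
    have hgm : Nat.gcd am bm = 1 := stern_gcd m
    have hgn : Nat.gcd an bn = 1 := stern_gcd n
    have h1 : am ∣ an := by
      have : am ∣ an * bm := ⟨bn, hmul.symm ▸ by ring⟩
      exact (Nat.Coprime.dvd_of_dvd_mul_right hgm this)
    have h2 : an ∣ am := by
      have : an ∣ am * bn := ⟨bm, hmul ▸ by ring⟩
      exact (Nat.Coprime.dvd_of_dvd_mul_right hgn this)
    have ha : am = an := Nat.dvd_antisymm h1 h2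
    have hb : bm = bn := by
      rcases Nat.eq_zero_or_pos am with h0 | h0
      · have h0' : an = 0 := by omega
        rw [h0] at hgm
        rw [h0'] at hgn
        simp at hgm hgn
        omega
      · have : am * bn = am * bm := by rw [hmul, ha]
        exact (Nat.eq_of_mul_eq_mul_left h0 this).symm
    exact stern_pair_inj m n (by omega) (by omega)
  · ext x
    simp only [Set.mem_range, Set.mem_setOf_eq, Set.mem_Ico]
    constructor
    · rintro ⟨n, rfl⟩
      rw [orbit_eq]
      set a := stern n with ha
      set b := stern (n + 1) with hb
      have hbp : 0 < b := stern_pos (n + 1) (by omega)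
      have habR : (0 : ℝ) < (a : ℝ) + (b : ℝ) := by
        have : (0:ℝ) < (b : ℝ) := by exact_mod_cast hbp
        positivity
      refine ⟨⟨by positivity, ?_⟩, ⟨(a : ℚ) / ((a : ℚ) + (b : ℚ)), by push_cast; ring⟩⟩
      rw [div_lt_one habR]
      have : (0:ℝ) < (b : ℝ) := by exact_mod_cast hbp
      linarith
    · rintro ⟨⟨hx0, hx1⟩, q, rfl⟩
      have hq0 : 0 ≤ q := by exact_mod_cast hx0
      have hq1 : q < 1 := by exact_mod_cast hx1
      set p := q.num.toNat with hp
      have hnum : (p : ℤ) = q.num := Int.toNat_of_nonneg (Rat.num_nonneg.mpr hq0)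
      have hden : 0 < q.den := q.pos
      have hpd : p < q.den := by
        have hdR : (0 : ℝ) < (q.den : ℝ) := by exact_mod_cast hden
        have h1R : (q.num : ℝ) < (q.den : ℝ) := by
          rw [Rat.cast_def, div_lt_one hdR] at hx1
          exact hx1
        have : q.num < (q.den : ℤ) := by exact_mod_cast h1R
        omega
      have hcop : Nat.gcd p (q.den - p) = 1 := by
        rw [Nat.gcd_sub_self_right (by omega)]
        have := q.reduced
        have hpabs : p = q.num.natAbs := by omega
        rw [hpabs]
        exact this
      obtain ⟨n, hn1, hn2⟩ := stern_pair_surj (p + (q.den - p)) p (q.den - p)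
        le_rfl (by omega) hcop
      refine ⟨n, ?_⟩
      rw [orbit_eq, hn1, hn2]
      have hsum : ((p : ℝ) + ((q.den - p : ℕ) : ℝ)) = (q.den : ℝ) := by
        push_cast [Nat.cast_sub (le_of_lt hpd)]
        ring
      rw [hsum]
      rw [Rat.cast_def]
      congr 1
      · exact_mod_cast hnum
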